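/- arXiv:2406.11490 — 2 statements merged into one kernel-verified Lean document; each statement's English description precedes it below -/
import Mathlib

section
/- Let X, Z, Y, U be finite types with conditional mass functions r(u), r(x | u), r(z | x), r(y | z, u), and suppose every conditional appearing below has positive denominator. Define the observational joint p(u, x, z, y) = r(u)·r(x|u)·r(z|x)·r(y|z,u) and the interventional distribution P(y | do(x)) = Σ_u r(u) Σ_z r(z | x)·r(y | z, u). Then P(y | do(x)) = Σ_z p(z | x) · Σ_{x'} p(y | x', z) · p(x'), where p(z|x), p(y|x',z), p(x') are the conditionals and marginal of the observational joint p. -/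
/-- Standard front-door adjustment as a finite-sum identity. -/
theorem front_door_adjustment
    {X Z Y U : Type*} [Fintype X] [Fintype Z] [Fintype Y] [Fintype U]
    (ru : U → ℝ) (rxu : U → X → ℝ) (rzx : X → Z → ℝ) (ryzu : Z → U → Y → ℝ)
    (hru_nonneg : ∀ u, 0 ≤ ru u) (hru_sum : ∑ u, ru u = 1)
    (hrxu_nonneg : ∀ u x, 0 ≤ rxu u x) (hrxu_sum : ∀ u, ∑ x, rxu u x = 1)
    (hrzx_nonneg : ∀ x z, 0 ≤ rzx x z) (hrzx_sum : ∀ x, ∑ z, rzx x z = 1)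
    (hryzu_nonneg : ∀ z u y, 0 ≤ ryzu z u y) (hryzu_sum : ∀ z u, ∑ y, ryzu z u y = 1)
    -- observational joint and its marginals
    (p : U → X → Z → Y → ℝ)
    (hp : ∀ u x z y, p u x z y = ru u * rxu u x * rzx x z * ryzu z u y)
    (pX : X → ℝ) (hpX : ∀ x, pX x = ∑ u, ∑ z, ∑ y, p u x z y)
    (pXZ : X → Z → ℝ) (hpXZ : ∀ x z, pXZ x z = ∑ u, ∑ y, p u x z y)
    (pXZY : X → Z → Y → ℝ) (hpXZY : ∀ x z y, pXZY x z y = ∑ u, p u x z y)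
    (hpX_pos : ∀ x, 0 < pX x) (hpXZ_pos : ∀ x z, 0 < pXZ x z) :
    ∀ x y,
      (∑ u, ru u * ∑ z, rzx x z * ryzu z u y) =
        ∑ z, (pXZ x z / pX x) * ∑ x', (pXZY x' z y / pXZ x' z) * pX x' := by
  intro x y
  have hA : ∀ x', pX x' = ∑ u, ru u * rxu u x' := by
    intro x'
    rw [hpX]
    refine Finset.sum_congr rfl fun u _ => ?_
    calc ∑ z, ∑ y', p u x' z y'
        = ∑ z, (ru u * rxu u x' * rzx x' z) * ∑ y', ryzu z u y' := by
          simp [hp, Finset.mul_sum]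
      _ = (ru u * rxu u x') * ∑ z, rzx x' z := by
          simp [hryzu_sum, Finset.mul_sum, mul_assoc]
      _ = ru u * rxu u x' := by rw [hrzx_sum]; ring
  have hB : ∀ x' z, pXZ x' z = rzx x' z * pX x' := by
    intro x' z
    rw [hpXZ, hA, Finset.mul_sum]
    refine Finset.sum_congr rfl fun u _ => ?_
    calc ∑ y', p u x' z y'
        = (ru u * rxu u x' * rzx x' z) * ∑ y', ryzu z u y' := by
          simp [hp, Finset.mul_sum]
      _ = rzx x' z * (ru u * rxu u x') := by rw [hryzu_sum]; ring
  have hC : ∀ x' z, pXZY x' z y = rzx x' z * ∑ u, ru u * rxu u x' * ryzu z u y := by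
    intro x' z
    rw [hpXZY, Finset.mul_sum]
    refine Finset.sum_congr rfl fun u _ => ?_
    rw [hp]; ring
  have hrzx_pos : ∀ x' z, 0 < rzx x' z := by
    intro x' z
    have h := hpXZ_pos x' z
    rw [hB] at h
    nlinarith [hpX_pos x', hrzx_nonneg x' z]
  have hterm : ∀ x' z, pXZY x' z y / pXZ x' z * pX x' =
      ∑ u, ru u * rxu u x' * ryzu z u y := by
    intro x' z
    rw [hC, hB, mul_div_mul_left _ _ (ne_of_gt (hrzx_pos x' z)),
      div_mul_cancel₀ _ (ne_of_gt (hpX_pos x'))]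
  calc (∑ u, ru u * ∑ z, rzx x z * ryzu z u y)
      = ∑ z, ∑ u, ru u * (rzx x z * ryzu z u y) := by
        rw [Finset.sum_comm]
        exact Finset.sum_congr rfl fun u _ => Finset.mul_sum _ _ _
    _ = ∑ z, rzx x z * ∑ u, ru u * ryzu z u y := by
        refine Finset.sum_congr rfl fun z _ => ?_
        rw [Finset.mul_sum]
        exact Finset.sum_congr rfl fun u _ => by ring
    _ = ∑ z, (pXZ x z / pX x) * ∑ x', (pXZY x' z y / pXZ x' z) * pX x' := by
        refine Finset.sum_congr rfl fun z _ => ?_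
        rw [hB, mul_div_assoc, div_self (ne_of_gt (hpX_pos x)), mul_one]
        congr 1
        calc ∑ u, ru u * ryzu z u y
            = ∑ u, (ru u * ryzu z u y) * ∑ x', rxu u x' := by
              simp [hrxu_sum]
          _ = ∑ u, ∑ x', ru u * rxu u x' * ryzu z u y := by
              refine Finset.sum_congr rfl fun u _ => ?_
              rw [Finset.mul_sum]
              exact Finset.sum_congr rfl fun x' _ => by ring
          _ = ∑ x', ∑ u, ru u * rxu u x' * ryzu z u y := Finset.sum_comm
          _ = ∑ x', pXZY x' z y / pXZ x' z * pX x' := by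
              exact Finset.sum_congr rfl fun x' _ => (hterm x' z).symm
end

section
/- Let K_P, K_A, D_P, D_A, Z, Y be finite types with conditional mass functions r(k_p), r(k_a), r(d_p | k_p), r(d_a | k_a), r(z | d_p, d_a), r(y | z, k_p, k_a), all relevant conditionals having positive denominators. Define the observational joint p(k_p, k_a, d_p, d_a, z, y) = r(k_p)·r(k_a)·r(d_p|k_p)·r(d_a|k_a)·r(z|d_p,d_a)·r(y|z,k_p,k_a), and the interventional distribution P(y | do(d_p)) = Σ_{z,k_p,k_a,d_a} r(k_a)·r(k_p)·r(d_a|k_a)·r(z|d_p,d_a)·r(y|z,k_a,k_p). Then P(y | do(d_p)) = Σ_z Σ_{d_a} Σ_{d_p'} p(y | z, d_p', d_a) · p(z | d_p, d_a) · p(d_a) · p(d_p'), where the conditionals and marginals on the right are those of the observational joint p. -/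
private lemma sum_rot3 {α β γ M : Type*} [Fintype α] [Fintype β] [Fintype γ]
    [AddCommMonoid M] (f : α → β → γ → M) :
    ∑ a, ∑ b, ∑ c, f a b c = ∑ c, ∑ a, ∑ b, f a b c := by
  calc ∑ a, ∑ b, ∑ c, f a b c
      = ∑ a, ∑ c, ∑ b, f a b c := Finset.sum_congr rfl fun a _ => Finset.sum_comm
    _ = ∑ c, ∑ a, ∑ b, f a b c := Finset.sum_comm

/-- β-generalization front-door adjustment as a finite-sum identity. -/
theorem beta_generalization_front_door_adjustment
    {KP KA DP DA Z Y : Type*}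
    [Fintype KP] [Fintype KA] [Fintype DP] [Fintype DA] [Fintype Z] [Fintype Y]
    (rkp : KP → ℝ) (rka : KA → ℝ)
    (rdp : KP → DP → ℝ) (rda : KA → DA → ℝ)
    (rz : DP → DA → Z → ℝ) (ry : Z → KP → KA → Y → ℝ)
    (hrkp_nonneg : ∀ kp, 0 ≤ rkp kp) (hrkp_sum : ∑ kp, rkp kp = 1)
    (hrka_nonneg : ∀ ka, 0 ≤ rka ka) (hrka_sum : ∑ ka, rka ka = 1)
    (hrdp_nonneg : ∀ kp dp, 0 ≤ rdp kp dp) (hrdp_sum : ∀ kp, ∑ dp, rdp kp dp = 1)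
    (hrda_nonneg : ∀ ka da, 0 ≤ rda ka da) (hrda_sum : ∀ ka, ∑ da, rda ka da = 1)
    (hrz_nonneg : ∀ dp da z, 0 ≤ rz dp da z) (hrz_sum : ∀ dp da, ∑ z, rz dp da z = 1)
    (hry_nonneg : ∀ z kp ka y, 0 ≤ ry z kp ka y)
    (hry_sum : ∀ z kp ka, ∑ y, ry z kp ka y = 1)
    -- observational joint and its marginals
    (p : KP → KA → DP → DA → Z → Y → ℝ)
    (hp : ∀ kp ka dp da z y, p kp ka dp da z y =
      rkp kp * rka ka * rdp kp dp * rda ka da * rz dp da z * ry z kp ka y)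
    (pDP : DP → ℝ) (hpDP : ∀ dp, pDP dp = ∑ kp, ∑ ka, ∑ da, ∑ z, ∑ y, p kp ka dp da z y)
    (pDA : DA → ℝ) (hpDA : ∀ da, pDA da = ∑ kp, ∑ ka, ∑ dp, ∑ z, ∑ y, p kp ka dp da z y)
    (pDPDA : DP → DA → ℝ)
    (hpDPDA : ∀ dp da, pDPDA dp da = ∑ kp, ∑ ka, ∑ z, ∑ y, p kp ka dp da z y)
    (pDPDAZ : DP → DA → Z → ℝ)
    (hpDPDAZ : ∀ dp da z, pDPDAZ dp da z = ∑ kp, ∑ ka, ∑ y, p kp ka dp da z y)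
    (pDPDAZY : DP → DA → Z → Y → ℝ)
    (hpDPDAZY : ∀ dp da z y, pDPDAZY dp da z y = ∑ kp, ∑ ka, p kp ka dp da z y)
    (hpDPDA_pos : ∀ dp da, 0 < pDPDA dp da)
    (hpDPDAZ_pos : ∀ dp da z, 0 < pDPDAZ dp da z) :
    ∀ dp y,
      (∑ z, ∑ kp, ∑ ka, ∑ da,
          rka ka * rkp kp * rda ka da * rz dp da z * ry z kp ka y) =
        ∑ z, ∑ da, ∑ dp',
          (pDPDAZY dp' da z y / pDPDAZ dp' da z) *
            (pDPDAZ dp da z / pDPDA dp da) * pDA da * pDP dp' := by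
  classical
  intro dp y
  set A : DP → ℝ := fun d => ∑ kp, rkp kp * rdp kp d with hA
  set B : DA → ℝ := fun d => ∑ ka, rka ka * rda ka d with hB
  set C : DP → DA → Z → Y → ℝ := fun d1 d2 z0 y0 =>
    ∑ kp, ∑ ka, rkp kp * rdp kp d1 * (rka ka * rda ka d2) * ry z0 kp ka y0 with hCdef
  have hAnn : ∀ d, 0 ≤ A d := fun d =>
    Finset.sum_nonneg fun kp _ => mul_nonneg (hrkp_nonneg kp) (hrdp_nonneg kp d)
  have hBnn : ∀ d, 0 ≤ B d := fun d =>
    Finset.sum_nonneg fun ka _ => mul_nonneg (hrka_nonneg ka) (hrda_nonneg ka d)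
  -- closed forms for the marginals
  have h1 : ∀ d1 d2 z0 y0, pDPDAZY d1 d2 z0 y0 = rz d1 d2 z0 * C d1 d2 z0 y0 := by
    intro d1 d2 z0 y0
    rw [hpDPDAZY]
    simp only [hp, hCdef, Finset.mul_sum]
    exact Finset.sum_congr rfl fun kp _ => Finset.sum_congr rfl fun ka _ => by ring
  have h2 : ∀ d1 d2 z0, pDPDAZ d1 d2 z0 = rz d1 d2 z0 * (A d1 * B d2) := by
    intro d1 d2 z0
    rw [hpDPDAZ]
    simp only [hp]
    calc ∑ kp, ∑ ka, ∑ y0,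
          rkp kp * rka ka * rdp kp d1 * rda ka d2 * rz d1 d2 z0 * ry z0 kp ka y0
        = ∑ kp, ∑ ka, rkp kp * rka ka * rdp kp d1 * rda ka d2 * rz d1 d2 z0 := by
          refine Finset.sum_congr rfl fun kp _ => Finset.sum_congr rfl fun ka _ => ?_
          rw [← Finset.mul_sum, hry_sum, mul_one]
      _ = rz d1 d2 z0 * (A d1 * B d2) := by
          simp only [hA, hB, Finset.mul_sum, Finset.sum_mul]
          rw [Finset.sum_comm]
          exact Finset.sum_congr rfl fun ka _ => Finset.sum_congr rfl fun kp _ => by ring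
  have h3 : ∀ d1 d2, pDPDA d1 d2 = A d1 * B d2 := by
    intro d1 d2
    rw [hpDPDA, sum_rot3 (fun kp ka z0 => ∑ y0, p kp ka d1 d2 z0 y0)]
    calc ∑ z0, ∑ kp, ∑ ka, ∑ y0, p kp ka d1 d2 z0 y0
        = ∑ z0, rz d1 d2 z0 * (A d1 * B d2) := by
          refine Finset.sum_congr rfl fun z0 _ => ?_
          rw [← hpDPDAZ, h2]
      _ = A d1 * B d2 := by rw [← Finset.sum_mul, hrz_sum, one_mul]
  have h4 : ∀ d2, pDA d2 = B d2 := by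
    intro d2
    rw [hpDA, sum_rot3 (fun kp ka d1 => ∑ z0, ∑ y0, p kp ka d1 d2 z0 y0)]
    calc ∑ d1, ∑ kp, ∑ ka, ∑ z0, ∑ y0, p kp ka d1 d2 z0 y0
        = ∑ d1, A d1 * B d2 := by
          refine Finset.sum_congr rfl fun d1 _ => ?_
          rw [← hpDPDA, h3]
      _ = (∑ d1, A d1) * B d2 := by rw [Finset.sum_mul]
      _ = B d2 := by
          have : (∑ d1, A d1) = 1 := by
            rw [hA]
            calc ∑ d1, ∑ kp, rkp kp * rdp kp d1
                = ∑ kp, ∑ d1, rkp kp * rdp kp d1 := Finset.sum_comm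
              _ = ∑ kp, rkp kp := by
                  refine Finset.sum_congr rfl fun kp _ => ?_
                  rw [← Finset.mul_sum, hrdp_sum, mul_one]
              _ = 1 := hrkp_sum
          rw [this, one_mul]
  have h5 : ∀ d1, pDP d1 = A d1 := by
    intro d1
    rw [hpDP, sum_rot3 (fun kp ka d2 => ∑ z0, ∑ y0, p kp ka d1 d2 z0 y0)]
    calc ∑ d2, ∑ kp, ∑ ka, ∑ z0, ∑ y0, p kp ka d1 d2 z0 y0
        = ∑ d2, A d1 * B d2 := by
          refine Finset.sum_congr rfl fun d2 _ => ?_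
          rw [← hpDPDA, h3]
      _ = A d1 * ∑ d2, B d2 := by rw [Finset.mul_sum]
      _ = A d1 := by
          have : (∑ d2, B d2) = 1 := by
            rw [hB]
            calc ∑ d2, ∑ ka, rka ka * rda ka d2
                = ∑ ka, ∑ d2, rka ka * rda ka d2 := Finset.sum_comm
              _ = ∑ ka, rka ka := by
                  refine Finset.sum_congr rfl fun ka _ => ?_
                  rw [← Finset.mul_sum, hrda_sum, mul_one]
              _ = 1 := hrka_sum
          rw [this, mul_one]
  -- positivity of the factors
  have key : ∀ d1 d2 z0, 0 < rz d1 d2 z0 ∧ 0 < A d1 ∧ 0 < B d2 := by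
    intro d1 d2 z0
    have h := hpDPDAZ_pos d1 d2 z0
    rw [h2] at h
    have hrzpos : 0 < rz d1 d2 z0 := by
      rcases (hrz_nonneg d1 d2 z0).lt_or_eq with h' | h'
      · exact h'
      · rw [← h', zero_mul] at h; linarith
    have hAB : 0 < A d1 * B d2 := by
      rcases (mul_nonneg (hAnn d1) (hBnn d2)).lt_or_eq with h' | h'
      · exact h'
      · rw [← h'] at h; linarith
    have hApos : 0 < A d1 := by
      rcases (hAnn d1).lt_or_eq with h' | h'
      · exact h'
      · rw [← h', zero_mul] at hAB; linarith
    have hBpos : 0 < B d2 := by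
      rcases (hBnn d2).lt_or_eq with h' | h'
      · exact h'
      · rw [← h', mul_zero] at hAB; linarith
    exact ⟨hrzpos, hApos, hBpos⟩
  -- simplify each summand of the RHS
  have hterm : ∀ z0 (d2 : DA) (d1 : DP),
      (pDPDAZY d1 d2 z0 y / pDPDAZ d1 d2 z0) *
        (pDPDAZ dp d2 z0 / pDPDA dp d2) * pDA d2 * pDP d1
      = rz dp d2 z0 * C d1 d2 z0 y := by
    intro z0 d2 d1
    obtain ⟨hrz1, hA1, hB1⟩ := key d1 d2 z0
    obtain ⟨hrz2, hA2, _⟩ := key dp d2 z0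
    rw [h1, h2, h2, h3, h4, h5]
    field_simp
  calc (∑ z0, ∑ kp, ∑ ka, ∑ da,
          rka ka * rkp kp * rda ka da * rz dp da z0 * ry z0 kp ka y)
      = ∑ z0, ∑ da, ∑ kp, ∑ ka,
          rka ka * rkp kp * rda ka da * rz dp da z0 * ry z0 kp ka y := by
        refine Finset.sum_congr rfl fun z0 _ => ?_
        exact sum_rot3 (fun kp ka da => rka ka * rkp kp * rda ka da * rz dp da z0 * ry z0 kp ka y)
    _ = ∑ z0, ∑ da, ∑ dp', rz dp da z0 * C dp' da z0 y := by
        refine Finset.sum_congr rfl fun z0 _ => Finset.sum_congr rfl fun da _ => ?_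
        have hcol : ∑ dp', C dp' da z0 y
            = ∑ kp, ∑ ka, rkp kp * (rka ka * rda ka da) * ry z0 kp ka y := by
          simp only [hCdef]
          rw [(sum_rot3 (fun kp ka dp' =>
            rkp kp * rdp kp dp' * (rka ka * rda ka da) * ry z0 kp ka y)).symm]
          refine Finset.sum_congr rfl fun kp _ => Finset.sum_congr rfl fun ka _ => ?_
          calc ∑ dp', rkp kp * rdp kp dp' * (rka ka * rda ka da) * ry z0 kp ka y
              = ∑ dp', (rkp kp * (rka ka * rda ka da) * ry z0 kp ka y) * rdp kp dp' := by
                refine Finset.sum_congr rfl fun dp' _ => by ring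
            _ = (rkp kp * (rka ka * rda ka da) * ry z0 kp ka y) * ∑ dp', rdp kp dp' := by
                rw [Finset.mul_sum]
            _ = rkp kp * (rka ka * rda ka da) * ry z0 kp ka y := by
                rw [hrdp_sum, mul_one]
        rw [← Finset.mul_sum, hcol]
        simp only [Finset.mul_sum]
        refine Finset.sum_congr rfl fun kp _ => Finset.sum_congr rfl fun ka _ => by ring
    _ = ∑ z0, ∑ da, ∑ dp',
          (pDPDAZY dp' da z0 y / pDPDAZ dp' da z0) *
            (pDPDAZ dp da z0 / pDPDA dp da) * pDA da * pDP dp' := by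
        refine Finset.sum_congr rfl fun z0 _ => Finset.sum_congr rfl fun da _ =>
          Finset.sum_congr rfl fun dp' _ => (hterm z0 da dp').symm
end
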